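/- Let f : ℝ^d × ℝ^d → ℝ be a continuously differentiable, globally Lipschitz function. Then for every t > 0 and every (p,ξ) ∈ ℝ^d × ℝ^d, the function P_t f is differentiable in p and ‖∇_p P_t f(p,ξ)‖² ≤ Σ_{i=1}^d P_t((∂_{p_i} f + t·∂_{ξ_i} f)²)(p,ξ). -/

import Mathlib

open MeasureTheory Real
open scoped RealInnerProductSpace NNReal

noncomputable section

abbrev Ed (d : ℕ) : Type := EuclideanSpace ℝ (Fin d)

/-- Density of the Gaussian law of `(B_t, ∫_0^t B_s ds)` for a `d`-dimensional
Brownian motion with variance `σ²`. -/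
def kolDensity (d : ℕ) (σ t : ℝ) (z : Ed d × Ed d) : ℝ :=
  ∏ i : Fin d, (Real.sqrt 3 / (Real.pi * σ ^ 2 * t ^ 2)) *
    Real.exp (-(2 / σ ^ 2) *
      ((z.1 i) ^ 2 / t - 3 * z.1 i * z.2 i / t ^ 2 + 3 * (z.2 i) ^ 2 / t ^ 3))

/-- The Kolmogorov semigroup `P_t`. -/
def kolP (d : ℕ) (σ t : ℝ) (f : Ed d × Ed d → ℝ) (x : Ed d × Ed d) : ℝ :=
  if t = 0 then f x
  else ∫ z : Ed d × Ed d, f (x.1 + z.1, x.2 + t • x.1 + z.2) * kolDensity d σ t z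

/-- Partial derivative in the variable `p_i`. -/
def dP (d : ℕ) (i : Fin d) (f : Ed d × Ed d → ℝ) (x : Ed d × Ed d) : ℝ :=
  fderiv ℝ f x ((EuclideanSpace.single i 1 : Ed d), (0 : Ed d))

/-- Partial derivative in the variable `ξ_i`. -/
def dXi (d : ℕ) (i : Fin d) (f : Ed d × Ed d → ℝ) (x : Ed d × Ed d) : ℝ :=
  fderiv ℝ f x ((0 : Ed d), (EuclideanSpace.single i 1 : Ed d))

/-- Gradient in the `p` variable. -/
def gradP (d : ℕ) (f : Ed d × Ed d → ℝ) (x : Ed d × Ed d) : Ed d :=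
  gradient (fun p => f (p, x.2)) x.1

/-- Gradient in the `ξ` variable. -/
def gradXi (d : ℕ) (f : Ed d × Ed d → ℝ) (x : Ed d × Ed d) : Ed d :=
  gradient (fun ξ => f (x.1, ξ)) x.2


/-!
Since `f` is `C¹` with `‖Df‖ ≤ K`, one may differentiate under the Gaussian integral: writing
`P_t f(p, ξ) = E[f((p, ξ + t p) + Z)]` with `Z ∼ ρ_t`, the chain rule gives `D_p P_t f = E[L]` with
`L = Df((p, ξ + t p) + Z) ∘ (v ↦ (v, t v))`, so that `L(e_i)` is `∂_{p_i} f + t ∂_{ξ_i} f` at that point.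
Then `‖E[L]‖² ≤ (E‖L‖)² ≤ E‖L‖² = ∑ᵢ E[L(e_i)²]` by Jensen, which needs the density `ρ_t`
to have total mass one; this is checked by completing the square in the exponent.
-/

open ProbabilityTheory

theorem EuclideanSpace.sq_opNorm_eq_sum_sq_apply_single {ι : Type*} [Fintype ι] [DecidableEq ι]
    (L : EuclideanSpace ℝ ι →L[ℝ] ℝ) :
    ‖L‖ ^ 2 = ∑ i, L (EuclideanSpace.single i 1) ^ 2 := by
  rw [← (InnerProductSpace.toDual ℝ _).symm.norm_map L, EuclideanSpace.norm_sq_eq]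
  refine Finset.sum_congr rfl fun i _ => ?_
  rw [← InnerProductSpace.toDual_symm_apply, EuclideanSpace.inner_single_right]
  simp

theorem sq_integral_le_integral_sq {Ω : Type*} [MeasurableSpace Ω] {μ : Measure Ω}
    [IsProbabilityMeasure μ] {X : Ω → ℝ} (hX : MemLp X 2 μ) :
    (∫ ω, X ω ∂μ) ^ 2 ≤ ∫ ω, X ω ^ 2 ∂μ := by
  have := variance_nonneg X μ
  rw [variance_eq_sub hX] at this
  simpa using this

theorem sq_norm_integral_le_sum_integral_sq_apply_single {α ι : Type*} [MeasurableSpace α]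
    {μ : Measure α} [IsProbabilityMeasure μ] [Fintype ι] [DecidableEq ι]
    {L : α → EuclideanSpace ℝ ι →L[ℝ] ℝ} (hL : MemLp L 2 μ) :
    ‖∫ a, L a ∂μ‖ ^ 2 ≤ ∑ i, ∫ a, L a (EuclideanSpace.single i 1) ^ 2 ∂μ := by
  have happly : ∀ v, MemLp (fun a => L a v) 2 μ := fun v =>
    (ContinuousLinearMap.apply ℝ ℝ v).comp_memLp' hL
  calc ‖∫ a, L a ∂μ‖ ^ 2 ≤ (∫ a, ‖L a‖ ∂μ) ^ 2 := by
        gcongr; exact norm_integral_le_integral_norm _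
    _ ≤ ∫ a, ‖L a‖ ^ 2 ∂μ := sq_integral_le_integral_sq hL.norm
    _ = ∑ i, ∫ a, L a (EuclideanSpace.single i 1) ^ 2 ∂μ := by
        simp_rw [EuclideanSpace.sq_opNorm_eq_sum_sq_apply_single]
        exact integral_finsetSum _ fun i _ => (happly _).integrable_sq

theorem lintegral_ofReal_exp_neg_mul_sq_norm {V : Type*} [NormedAddCommGroup V]
    [InnerProductSpace ℝ V] [FiniteDimensional ℝ V] [MeasurableSpace V] [BorelSpace V]
    {b : ℝ} (hb : 0 < b) :
    ∫⁻ v : V, ENNReal.ofReal (exp (-b * ‖v‖ ^ 2)) =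
      ENNReal.ofReal ((π / b) ^ (Module.finrank ℝ V / 2 : ℝ)) := by
  have hint := GaussianFourier.integral_rexp_neg_mul_sq_norm (V := V) hb
  rw [← hint, ofReal_integral_eq_lintegral_ofReal _ (ae_of_all _ fun _ => (exp_pos _).le)]
  refine Integrable.of_integral_ne_zero ?_
  rw [hint]
  positivity

section IntegralCompAdd

variable {E : Type*} [NormedAddCommGroup E] [MeasurableSpace E] [BorelSpace E] {μ : Measure E}
  [IsFiniteMeasure μ] {f : E → ℝ} {K : ℝ≥0}

theorem LipschitzWith.integrable_comp_add (hLip : LipschitzWith K f) {x : E}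
    (hx : Integrable (fun z => f (x + z)) μ) (y : E) : Integrable (fun z => f (y + z)) μ := by
  have hcont := hLip.continuous
  have hdiff : Integrable (fun z => f (y + z) - f (x + z)) μ := by
    refine Integrable.of_bound (by fun_prop) (K * ‖y - x‖) (ae_of_all _ fun z => ?_)
    simpa [dist_eq_norm] using hLip.dist_le_mul (y + z) (x + z)
  refine (hdiff.add hx).congr (ae_of_all _ fun z => ?_)
  simp

variable [NormedSpace ℝ E] [SecondCountableTopology E]

theorem hasFDerivAt_integral_comp_add (hf : ContDiff ℝ 1 f) (hLip : LipschitzWith K f) {x : E}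
    (hx : Integrable (fun z => f (x + z)) μ) :
    HasFDerivAt (fun y => ∫ z, f (y + z) ∂μ) (∫ z, fderiv ℝ f (x + z) ∂μ) x := by
  have hcont := hf.continuous
  refine (hasFDerivAt_integral_of_dominated_loc_of_lip (bound := fun _ => K) Filter.univ_mem
    (Filter.Eventually.of_forall fun y => by fun_prop) hx ?_ ?_ (integrable_const _) ?_).2
  · exact ((hf.continuous_fderiv one_ne_zero).comp (by fun_prop)).aestronglyMeasurable
  · refine ae_of_all _ fun z => LipschitzOnWith.of_dist_le_mul fun a _ b _ => ?_
    simpa using hLip.dist_le_mul (a + z) (b + z)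
  · exact ae_of_all _ fun z =>
      (hasFDerivAt_comp_add_right z).2 (hf.differentiable one_ne_zero _).hasFDerivAt

theorem differentiableAt_and_sq_norm_gradient_le_of_integral_comp_add [IsProbabilityMeasure μ]
    {ι : Type*} [Fintype ι] [DecidableEq ι] {φ : EuclideanSpace ℝ ι → E}
    {A : EuclideanSpace ℝ ι →L[ℝ] E} {p : EuclideanSpace ℝ ι} (hφ : HasFDerivAt φ A p)
    (hf : ContDiff ℝ 1 f) (hLip : LipschitzWith K f) :
    DifferentiableAt ℝ (fun p' => ∫ z, f (φ p' + z) ∂μ) p ∧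
      ‖gradient (fun p' => ∫ z, f (φ p' + z) ∂μ) p‖ ^ 2 ≤
        ∑ i, ∫ z, fderiv ℝ f (φ p + z) (A (EuclideanSpace.single i 1)) ^ 2 ∂μ := by
  by_cases hint : Integrable (fun z => f (φ p + z)) μ
  · have hderiv : HasFDerivAt (fun p' => ∫ z, f (φ p' + z) ∂μ)
        ((∫ z, fderiv ℝ f (φ p + z) ∂μ).comp A) p :=
      (hasFDerivAt_integral_comp_add hf hLip hint).comp p hφ
    have hD : MemLp (fun z => fderiv ℝ f (φ p + z)) 2 μ :=
      MemLp.of_bound ((hf.continuous_fderiv one_ne_zero).comp (by fun_prop)).aestronglyMeasurable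
        K (ae_of_all _ fun z => norm_fderiv_le_of_lipschitz ℝ hLip)
    let precompA := (ContinuousLinearMap.compL ℝ _ _ ℝ).flip A
    have hcomm : (∫ z, fderiv ℝ f (φ p + z) ∂μ).comp A = ∫ z, (fderiv ℝ f (φ p + z)).comp A ∂μ :=
      (precompA.integral_comp_comm (hD.integrable one_le_two)).symm
    refine ⟨hderiv.differentiableAt, ?_⟩
    rw [gradient, hderiv.fderiv, LinearIsometryEquiv.norm_map, hcomm]
    exact sq_norm_integral_le_sum_integral_sq_apply_single (precompA.comp_memLp' hD)
  -- Non-integrability at `φ p` propagates to every `p'`, where `∫` then takes the junk value `0`.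
  · have hzero : (fun p' => ∫ z, f (φ p' + z) ∂μ) = fun _ => 0 :=
      funext fun p' => integral_undef fun h => hint (hLip.integrable_comp_add h _)
    rw [hzero, gradient_fun_const]
    refine ⟨differentiableAt_const _, ?_⟩
    simpa using Finset.sum_nonneg fun i _ => integral_nonneg fun z => sq_nonneg _

end IntegralCompAdd

section KolmogorovMeasure

variable {d : ℕ} {σ t : ℝ}

theorem kolDensity_nonneg (z : Ed d × Ed d) : 0 ≤ kolDensity d σ t z :=
  Finset.prod_nonneg fun _ _ => by positivity

theorem continuous_kolDensity : Continuous (kolDensity d σ t) := by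
  unfold kolDensity
  fun_prop

-- Completing the square in `z.2`.
theorem kolDensity_eq (ht : t ≠ 0) (z : Ed d × Ed d) :
    kolDensity d σ t z = (√3 / (π * σ ^ 2 * t ^ 2)) ^ d *
      (exp (-(1 / (2 * σ ^ 2 * t)) * ‖z.1‖ ^ 2) *
        exp (-(6 / (σ ^ 2 * t ^ 3)) * ‖z.2 - (t / 2) • z.1‖ ^ 2)) := by
  rw [kolDensity, Finset.prod_mul_distrib, Finset.prod_const, Finset.card_univ,
    Fintype.card_fin, ← Real.exp_sum, ← Real.exp_add, EuclideanSpace.norm_sq_eq,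
    EuclideanSpace.norm_sq_eq, Finset.mul_sum, Finset.mul_sum, ← Finset.sum_add_distrib]
  congr 2
  refine Finset.sum_congr rfl fun i _ => ?_
  simp only [Real.norm_eq_abs, sq_abs, PiLp.sub_apply, PiLp.smul_apply, smul_eq_mul]
  field_simp
  ring

theorem kolDensity_normalization (hσ : 0 < σ) (ht : 0 < t) :
    √3 / (π * σ ^ 2 * t ^ 2) * √(π / (1 / (2 * σ ^ 2 * t))) * √(π / (6 / (σ ^ 2 * t ^ 3))) = 1 := by
  have hA : 0 < π * σ ^ 2 * t ^ 2 := by positivity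
  rw [mul_assoc, ← Real.sqrt_mul (by positivity),
    show π / (1 / (2 * σ ^ 2 * t)) * (π / (6 / (σ ^ 2 * t ^ 3))) = (π * σ ^ 2 * t ^ 2) ^ 2 / 3 by
      field_simp; ring,
    Real.sqrt_div (sq_nonneg _), Real.sqrt_sq hA.le]
  field_simp

theorem lintegral_kolDensity (hσ : 0 < σ) (ht : 0 < t) :
    ∫⁻ z : Ed d × Ed d, ENNReal.ofReal (kolDensity d σ t z) = 1 := by
  simp_rw [kolDensity_eq ht.ne']
  rw [show (volume : Measure (Ed d × Ed d)) = (volume : Measure (Ed d)).prod volume from rfl,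
    lintegral_prod _ (by fun_prop)]
  set a : ℝ := 1 / (2 * σ ^ 2 * t)
  set b : ℝ := 6 / (σ ^ 2 * t ^ 3)
  set c : ℝ := √3 / (π * σ ^ 2 * t ^ 2)
  have ha : 0 < a := by positivity
  have hb : 0 < b := by positivity
  have hc : 0 ≤ c ^ d := by positivity
  have hinner : ∀ x : Ed d, ∫⁻ y : Ed d,
      ENNReal.ofReal (c ^ d * (exp (-a * ‖x‖ ^ 2) * exp (-b * ‖y - (t / 2) • x‖ ^ 2))) =
        ENNReal.ofReal (c ^ d * exp (-a * ‖x‖ ^ 2)) * ENNReal.ofReal ((π / b) ^ (d / 2 : ℝ)) := by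
    intro x
    simp_rw [← mul_assoc, ENNReal.ofReal_mul (by positivity : 0 ≤ c ^ d * exp (-a * ‖x‖ ^ 2))]
    rw [lintegral_const_mul _ (by fun_prop),
      lintegral_sub_right_eq_self (fun y => ENNReal.ofReal (exp (-b * ‖y‖ ^ 2))),
      lintegral_ofReal_exp_neg_mul_sq_norm hb, finrank_euclideanSpace_fin]
  simp_rw [hinner, ENNReal.ofReal_mul hc]
  rw [lintegral_mul_const _ (by fun_prop), lintegral_const_mul _ (by fun_prop),
    lintegral_ofReal_exp_neg_mul_sq_norm ha, finrank_euclideanSpace_fin,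
    ← ENNReal.ofReal_mul hc, ← ENNReal.ofReal_mul (by positivity),
    Real.rpow_div_two_eq_sqrt _ (by positivity), Real.rpow_div_two_eq_sqrt _ (by positivity),
    Real.rpow_natCast, Real.rpow_natCast, ← mul_pow, ← mul_pow, kolDensity_normalization hσ ht,
    one_pow, ENNReal.ofReal_one]

end KolmogorovMeasure

def kolMeasure (d : ℕ) (σ t : ℝ) : Measure (Ed d × Ed d) :=
  volume.withDensity fun z => ENNReal.ofReal (kolDensity d σ t z)

section KolmogorovSemigroup

variable {d : ℕ} {σ t : ℝ}

theorem isProbabilityMeasure_kolMeasure (hσ : 0 < σ) (ht : 0 < t) :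
    IsProbabilityMeasure (kolMeasure d σ t) :=
  ⟨by rw [kolMeasure, withDensity_apply _ MeasurableSet.univ, Measure.restrict_univ,
    lintegral_kolDensity hσ ht]⟩

theorem kolP_eq_integral (ht : t ≠ 0) (g : Ed d × Ed d → ℝ) (x : Ed d × Ed d) :
    kolP d σ t g x = ∫ z, g ((x.1, x.2 + t • x.1) + z) ∂kolMeasure d σ t := by
  have hρ : Measurable fun z => ENNReal.ofReal (kolDensity d σ t z) :=
    ENNReal.measurable_ofReal.comp continuous_kolDensity.measurable
  rw [kolP, if_neg ht, kolMeasure, integral_withDensity_eq_integral_toReal_smul hρ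
    (ae_of_all _ fun _ => ENNReal.ofReal_lt_top)]
  refine integral_congr_ae (ae_of_all _ fun z => ?_)
  dsimp only
  rw [ENNReal.toReal_ofReal (kolDensity_nonneg z), smul_eq_mul, mul_comm]
  rfl

theorem dP_add_mul_dXi (i : Fin d) (f : Ed d × Ed d → ℝ) (x : Ed d × Ed d) :
    dP d i f x + t * dXi d i f x =
      fderiv ℝ f x (EuclideanSpace.single i 1, t • EuclideanSpace.single i 1) := by
  rw [dP, dXi, ← smul_eq_mul, ← map_smul, ← map_add]
  simp

end KolmogorovSemigroup

theorem kolmogorov_gradP_bound (d : ℕ) (σ : ℝ) (hσ : 0 < σ)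
    (f : Ed d × Ed d → ℝ) (hf : ContDiff ℝ 1 f) (K : ℝ≥0) (hLip : LipschitzWith K f)
    (t : ℝ) (ht : 0 < t) (p ξ : Ed d) :
    DifferentiableAt ℝ (fun p' => kolP d σ t f (p', ξ)) p ∧
    ‖gradient (fun p' => kolP d σ t f (p', ξ)) p‖ ^ 2 ≤
      ∑ i : Fin d, kolP d σ t (fun x => (dP d i f x + t * dXi d i f x) ^ 2) (p, ξ) := by
  have := isProbabilityMeasure_kolMeasure (d := d) hσ ht
  have hφ : HasFDerivAt (fun p' : Ed d => ((p', ξ + t • p') : Ed d × Ed d))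
      ((ContinuousLinearMap.id ℝ (Ed d)).prod (t • ContinuousLinearMap.id ℝ (Ed d))) p :=
    (hasFDerivAt_id p).prodMk (((hasFDerivAt_id p).const_smul t).const_add ξ)
  have hP : (fun p' => kolP d σ t f (p', ξ)) =
      fun p' => ∫ z, f ((p', ξ + t • p') + z) ∂kolMeasure d σ t :=
    funext fun p' => kolP_eq_integral ht.ne' f (p', ξ)
  rw [hP]
  refine (differentiableAt_and_sq_norm_gradient_le_of_integral_comp_add hφ hf hLip).imp_right
    fun h => h.trans_eq (Finset.sum_congr rfl fun i _ => ?_)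
  rw [kolP_eq_integral ht.ne']
  simp [dP_add_mul_dXi]
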